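/- arXiv:2310.06510 — 2 statements merged into one kernel-verified Lean document; each statement's English description precedes it below -/
import Mathlib

section
/- The second derivatives of the rescaled iterates are uniformly bounded: there exists a constant K (depending only on a, δ, C, ε*) such that |φₙ″(x)| ≤ K for all n ≥ 1 and all x ∈ [0, ε*]. -/
/-!
By the chain rule `(f^[n])' = ∏_{i<n} f' ∘ f^[i]`, and the product rule turns this into the
recursion `E_{n+1} = E_n · f' ∘ f^[n] + ((f^[n])')² · f'' ∘ f^[n]` for `E_n = (f^[n])''`.
Along an orbit `f^[i] x ≤ ((1 + δ) a)^i ε*` decays geometrically, while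
`|f'(y)| ≤ a + C y ≤ a exp (C y / a)`; hence `|(f^[n])'| ≤ aⁿ M` with
`M = exp (C ε* / (a (1 - (1 + δ) a)))`, and the recursion gives
`|E_n| ≤ C M³ aⁿ / (a (1 - a))`.
-/

open Finset Real
open Set (Icc MapsTo)

section Chain

variable {𝕜 : Type*} [NontriviallyNormedField 𝕜] {f f' f'' : 𝕜 → 𝕜} {s : Set 𝕜} {x : 𝕜}

def derivIterate (f f' : 𝕜 → 𝕜) (n : ℕ) (x : 𝕜) : 𝕜 :=
  ∏ i ∈ range n, f' (f^[i] x)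

-- Product rule applied to `derivIterate f f' (n + 1) = derivIterate f f' n * f' ∘ f^[n]`.
def deriv2Iterate (f f' f'' : 𝕜 → 𝕜) : ℕ → 𝕜 → 𝕜
  | 0, _ => 0
  | n + 1, x =>
    deriv2Iterate f f' f'' n x * f' (f^[n] x) + derivIterate f f' n x ^ 2 * f'' (f^[n] x)

theorem derivIterate_succ (n : ℕ) :
    derivIterate f f' (n + 1) x = derivIterate f f' n x * f' (f^[n] x) :=
  prod_range_succ _ _

theorem hasDerivWithinAt_iterate (hs : MapsTo f s s)
    (hf : ∀ y ∈ s, HasDerivWithinAt f (f' y) s y) (n : ℕ) (hx : x ∈ s) :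
    HasDerivWithinAt f^[n] (derivIterate f f' n x) s x := by
  induction n with
  | zero => simpa [derivIterate] using hasDerivWithinAt_id x s
  | succ n ih =>
    rw [derivIterate_succ, mul_comm, Function.iterate_succ']
    exact (hf _ (hs.iterate n hx)).comp x ih (hs.iterate n)

theorem hasDerivWithinAt_derivIterate (hs : MapsTo f s s)
    (hf : ∀ y ∈ s, HasDerivWithinAt f (f' y) s y)
    (hf' : ∀ y ∈ s, HasDerivWithinAt f' (f'' y) s y) (n : ℕ) (hx : x ∈ s) :
    HasDerivWithinAt (derivIterate f f' n) (deriv2Iterate f f' f'' n x) s x := by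
  induction n with
  | zero =>
    have hone : derivIterate f f' 0 = fun _ ↦ 1 := funext fun _ ↦ prod_range_zero _
    exact hone ▸ hasDerivWithinAt_const x s 1
  | succ n ih =>
    have hcomp : HasDerivWithinAt (fun y ↦ f' (f^[n] y))
        (f'' (f^[n] x) * derivIterate f f' n x) s x :=
      (hf' _ (hs.iterate n hx)).comp x (hasDerivWithinAt_iterate hs hf n hx) (hs.iterate n)
    have hprod : derivIterate f f' (n + 1) = fun y ↦ derivIterate f f' n y * f' (f^[n] y) :=
      funext fun _ ↦ derivIterate_succ n
    rw [hprod, deriv2Iterate]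
    exact (ih.fun_mul hcomp).congr_deriv (by ring)

theorem derivWithin_derivWithin_iterate (hU : UniqueDiffOn 𝕜 s) (hs : MapsTo f s s)
    (hf : ∀ y ∈ s, HasDerivWithinAt f (f' y) s y)
    (hf' : ∀ y ∈ s, HasDerivWithinAt f' (f'' y) s y) (n : ℕ) (hx : x ∈ s) :
    derivWithin (derivWithin f^[n] s) s x = deriv2Iterate f f' f'' n x := by
  have hfirst : ∀ y ∈ s, derivWithin f^[n] s y = derivIterate f f' n y := fun y hy ↦
    (hasDerivWithinAt_iterate hs hf n hy).derivWithin (hU y hy)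
  rw [derivWithin_congr hfirst (hfirst x hx)]
  exact (hasDerivWithinAt_derivIterate hs hf hf' n hx).derivWithin (hU x hx)

end Chain

section Bounds

variable {f g h : ℝ → ℝ} {a k C r ε x : ℝ}

theorem mapsTo_Icc_of_le_mul (hr : r ≤ 1) (hf : ∀ y ∈ Icc 0 ε, 0 ≤ f y ∧ f y ≤ r * y) :
    MapsTo f (Icc 0 ε) (Icc 0 ε) := fun y hy ↦
  ⟨(hf y hy).1, by nlinarith [(hf y hy).2, hy.1, hy.2]⟩

theorem iterate_le_pow_mul (hr0 : 0 ≤ r) (hr1 : r ≤ 1)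
    (hf : ∀ y ∈ Icc 0 ε, 0 ≤ f y ∧ f y ≤ r * y) (n : ℕ) (hx : x ∈ Icc 0 ε) :
    f^[n] x ≤ r ^ n * x := by
  induction n with
  | zero => simp
  | succ n ih =>
    rw [Function.iterate_succ_apply']
    calc f (f^[n] x) ≤ r * f^[n] x := (hf _ ((mapsTo_Icc_of_le_mul hr1 hf).iterate n hx)).2
      _ ≤ r * (r ^ n * x) := mul_le_mul_of_nonneg_left ih hr0
      _ = r ^ (n + 1) * x := by ring

theorem sum_iterate_le (hr0 : 0 ≤ r) (hr1 : r < 1)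
    (hf : ∀ y ∈ Icc 0 ε, 0 ≤ f y ∧ f y ≤ r * y) (n : ℕ) (hx : x ∈ Icc 0 ε) :
    ∑ i ∈ range n, f^[i] x ≤ ε / (1 - r) := by
  have hgeom : ∑ i ∈ range n, r ^ i ≤ 1 / (1 - r) := by
    have := geom_sum_Ico_le_of_lt_one (m := 0) (n := n) hr0 hr1
    rwa [← range_eq_Ico, pow_zero] at this
  calc ∑ i ∈ range n, f^[i] x ≤ ∑ i ∈ range n, ε * r ^ i := sum_le_sum fun i _ ↦ by
        nlinarith [iterate_le_pow_mul hr0 hr1.le hf i hx, pow_nonneg hr0 i, hx.2]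
    _ = ε * ∑ i ∈ range n, r ^ i := (mul_sum _ _ _).symm
    _ ≤ ε * (1 / (1 - r)) := mul_le_mul_of_nonneg_left hgeom (hx.1.trans hx.2)
    _ = ε / (1 - r) := mul_one_div _ _

theorem abs_le_mul_exp_of_abs_sub_le {v y : ℝ} (ha : 0 < a) (h : |v - a| ≤ k * y) :
    |v| ≤ a * exp (k / a * y) := by
  have hv : |v| ≤ a + k * y := by
    have := abs_sub_abs_le_abs_sub v a
    rw [abs_of_pos ha] at this
    linarith
  calc |v| ≤ a * (k / a * y + 1) := by
        rwa [mul_add, ← mul_assoc, mul_div_cancel₀ _ ha.ne', mul_one, add_comm]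
    _ ≤ a * exp (k / a * y) := mul_le_mul_of_nonneg_left (add_one_le_exp _) ha.le

theorem abs_derivIterate_le {s : Set ℝ} (hs : MapsTo f s s)
    (hg : ∀ y ∈ s, |g y| ≤ a * exp (k * y)) (n : ℕ) (hx : x ∈ s) :
    |derivIterate f g n x| ≤ a ^ n * exp (k * ∑ i ∈ range n, f^[i] x) :=
  calc |derivIterate f g n x| = ∏ i ∈ range n, |g (f^[i] x)| := abs_prod _ _
    _ ≤ ∏ i ∈ range n, a * exp (k * f^[i] x) :=
      prod_le_prod (fun _ _ ↦ abs_nonneg _) fun i _ ↦ hg _ (hs.iterate i hx)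
    _ = a ^ n * exp (k * ∑ i ∈ range n, f^[i] x) := by
      rw [prod_mul_distrib, prod_const, card_range, mul_sum, exp_sum]

theorem mul_one_sub_mul_le_of_le_mul_add {u ρ : ℕ → ℝ} {B : ℝ} (ha0 : 0 ≤ a)
    (ha1 : a ≤ 1) (hB : 0 ≤ B) (hρ : ∀ n, 1 ≤ ρ n) (hu0 : u 0 ≤ 0)
    (hu : ∀ n, u (n + 1) ≤ a * ρ n * u n + B * a ^ (2 * n)) (n : ℕ) :
    a * (1 - a) * u n ≤ B * (∏ i ∈ range n, ρ i) * (a ^ n - a ^ (2 * n)) := by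
  -- The `- a ^ (2 * n)` in the invariant absorbs the inhomogeneous term `B a ^ (2 * n)`.
  induction n with
  | zero => simpa using mul_nonpos_of_nonneg_of_nonpos (mul_nonneg ha0 (sub_nonneg.2 ha1)) hu0
  | succ n ih =>
    set P := ∏ i ∈ range n, ρ i
    have hP : 1 ≤ P * ρ n := prod_range_succ ρ n ▸ one_le_prod fun i _ ↦ hρ i
    have htail : 0 ≤ B * (1 - a) * a ^ (2 * n + 1) :=
      mul_nonneg (mul_nonneg hB (sub_nonneg.2 ha1)) (pow_nonneg ha0 _)
    calc a * (1 - a) * u (n + 1)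
        ≤ a * (1 - a) * (a * ρ n * u n + B * a ^ (2 * n)) :=
          mul_le_mul_of_nonneg_left (hu n) (mul_nonneg ha0 (sub_nonneg.2 ha1))
      _ = a * ρ n * (a * (1 - a) * u n) + B * (1 - a) * a ^ (2 * n + 1) := by ring
      _ ≤ a * ρ n * (B * P * (a ^ n - a ^ (2 * n)))
            + P * ρ n * (B * (1 - a) * a ^ (2 * n + 1)) :=
          add_le_add (mul_le_mul_of_nonneg_left ih (mul_nonneg ha0 (zero_le_one.trans (hρ n))))
            (le_mul_of_one_le_left htail hP)
      _ = B * (∏ i ∈ range (n + 1), ρ i) * (a ^ (n + 1) - a ^ (2 * (n + 1))) := by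
          rw [prod_range_succ]; ring

theorem abs_deriv2Iterate_le (ha0 : 0 < a) (ha1 : a < 1)
    (hk : 0 ≤ k) (hC : 0 ≤ C) (hr0 : 0 ≤ r) (hr1 : r < 1)
    (hf : ∀ y ∈ Icc 0 ε, 0 ≤ f y ∧ f y ≤ r * y)
    (hg : ∀ y ∈ Icc 0 ε, |g y| ≤ a * exp (k * y))
    (hh : ∀ y ∈ Icc 0 ε, |h y| ≤ C) (n : ℕ) (hx : x ∈ Icc 0 ε) :
    |deriv2Iterate f g h n x| ≤ C * exp (k * ε / (1 - r)) ^ 3 / (a * (1 - a)) * a ^ n := by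
  set M := exp (k * ε / (1 - r))
  have hs := mapsTo_Icc_of_le_mul hr1.le hf
  have hexp_le : ∀ m, exp (k * ∑ i ∈ range m, f^[i] x) ≤ M := fun m ↦ exp_le_exp.2 <| by
    rw [mul_div_assoc]; exact mul_le_mul_of_nonneg_left (sum_iterate_le hr0 hr1 hf m hx) hk
  have hD : ∀ m, |derivIterate f g m x| ≤ a ^ m * M := fun m ↦
    (abs_derivIterate_le hs hg m hx).trans (mul_le_mul_of_nonneg_left (hexp_le m) (by positivity))
  have hrec : ∀ m, |deriv2Iterate f g h (m + 1) x| ≤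
      a * exp (k * f^[m] x) * |deriv2Iterate f g h m x| + C * M ^ 2 * a ^ (2 * m) := fun m ↦
    calc |deriv2Iterate f g h (m + 1) x|
        ≤ |deriv2Iterate f g h m x| * |g (f^[m] x)|
            + |derivIterate f g m x| ^ 2 * |h (f^[m] x)| := by
          rw [deriv2Iterate, ← abs_mul, ← abs_pow, ← abs_mul]; exact abs_add_le _ _
      _ ≤ |deriv2Iterate f g h m x| * (a * exp (k * f^[m] x)) + (a ^ m * M) ^ 2 * C := by
          gcongr
          exacts [hg _ (hs.iterate m hx), hD m, hh _ (hs.iterate m hx)]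
      _ = _ := by ring
  have hinv := mul_one_sub_mul_le_of_le_mul_add (u := fun m ↦ |deriv2Iterate f g h m x|)
    ha0.le ha1.le (by positivity)
    (fun i ↦ one_le_exp (mul_nonneg hk (hs.iterate i hx).1)) (by simp [deriv2Iterate]) hrec n
  rw [← exp_sum, ← mul_sum] at hinv
  have hpow : 0 ≤ a ^ n - a ^ (2 * n) :=
    sub_nonneg.2 (pow_le_pow_of_le_one ha0.le ha1.le (by omega))
  rw [div_mul_eq_mul_div, le_div_iff₀ (mul_pos ha0 (sub_pos.2 ha1)), mul_comm]
  calc a * (1 - a) * |deriv2Iterate f g h n x|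
      ≤ C * M ^ 2 * exp (k * ∑ i ∈ range n, f^[i] x) * (a ^ n - a ^ (2 * n)) := hinv
    _ ≤ C * M ^ 2 * M * a ^ n := by
      gcongr
      · exact hexp_le n
      · exact sub_le_self _ (pow_nonneg ha0.le _)
    _ = C * M ^ 3 * a ^ n := by ring

end Bounds

theorem rescaled_iterates_second_deriv_bounded_general (a δ C εs : ℝ) (f : ℝ → ℝ)
    (ha0 : 0 < a) (ha1 : a < 1) (hδ : 0 < δ) (hC : 0 < C) (hεs : 0 < εs)
    (hsmall : a * (1 + δ) ^ 2 < 1)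
    (hf : ContDiffOn ℝ 2 f (Set.Icc 0 εs))
    (hf'0 : derivWithin f (Set.Icc 0 εs) 0 = a)
    (hf'' : ∀ x ∈ Set.Icc 0 εs,
      |derivWithin (derivWithin f (Set.Icc 0 εs)) (Set.Icc 0 εs) x| ≤ C)
    (hf1 : ∀ x ∈ Set.Icc 0 εs, 0 ≤ f x ∧ f x ≤ (1 + δ) * a * x) :
    ∃ K : ℝ, ∀ n : ℕ, 1 ≤ n → ∀ x ∈ Set.Icc 0 εs,
      |derivWithin (derivWithin (fun y => f^[n] y / a ^ n) (Set.Icc 0 εs))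
        (Set.Icc 0 εs) x| ≤ K := by
  set S := Icc 0 εs
  have hU : UniqueDiffOn ℝ S := uniqueDiffOn_Icc hεs
  have hr0 : 0 ≤ (1 + δ) * a := by positivity
  have hr1 : (1 + δ) * a < 1 := by nlinarith
  have hderiv : ∀ y ∈ S, HasDerivWithinAt f (derivWithin f S y) S y := fun y hy ↦
    (hf.differentiableOn two_ne_zero y hy).hasDerivWithinAt
  have hderiv2 : ∀ y ∈ S,
      HasDerivWithinAt (derivWithin f S) (derivWithin (derivWithin f S) S y) S y :=
    fun y hy ↦ ((hf.derivWithin hU le_rfl).differentiableOn one_ne_zero y hy).hasDerivWithinAt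
  have hderiv_le : ∀ y ∈ S, |derivWithin f S y| ≤ a * exp (C / a * y) := fun y hy ↦ by
    refine abs_le_mul_exp_of_abs_sub_le ha0 ?_
    simpa [hf'0, abs_of_nonneg hy.1] using
      (convex_Icc 0 εs).norm_image_sub_le_of_norm_hasDerivWithin_le hderiv2 hf'' ⟨le_rfl, hεs.le⟩ hy
  refine ⟨C * exp (C / a * εs / (1 - (1 + δ) * a)) ^ 3 / (a * (1 - a)), fun n _ x hx ↦ ?_⟩
  have hdiv : derivWithin (fun y ↦ f^[n] y / a ^ n) S = fun y ↦ derivWithin f^[n] S y / a ^ n :=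
    funext fun y ↦ derivWithin_div_const _ _
  rw [hdiv, derivWithin_div_const,
    derivWithin_derivWithin_iterate hU (mapsTo_Icc_of_le_mul hr1.le hf1) hderiv hderiv2 n hx,
    abs_div, abs_of_pos (pow_pos ha0 n), div_le_iff₀ (pow_pos ha0 n)]
  exact abs_deriv2Iterate_le ha0 ha1 (by positivity) hC.le hr0 hr1 hf1 hderiv_le hf'' n hx

/-- Under the standing hypotheses, the second derivatives of the rescaled
iterates `φₙ(x) = f⁽ⁿ⁾(x)/aⁿ` are uniformly bounded: there is a constant `K` such that
`|φₙ″(x)| ≤ K` for all `n ≥ 1` and `x ∈ [0,ε*]`. -/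
theorem rescaled_iterates_second_deriv_bounded (a δ C εs : ℝ) (f : ℝ → ℝ)
    (ha0 : 0 < a) (ha1 : a < 1) (hδ : 0 < δ) (hC : 0 < C) (hεs : 0 < εs)
    (hsmall : a * (1 + δ) ^ 2 < 1)
    (hf : ContDiffOn ℝ 2 f (Set.Icc 0 εs))
    (hf0 : f 0 = 0)
    (hf'0 : derivWithin f (Set.Icc 0 εs) 0 = a)
    (hf'' : ∀ x ∈ Set.Icc 0 εs,
      |derivWithin (derivWithin f (Set.Icc 0 εs)) (Set.Icc 0 εs) x| ≤ C)
    (hf1 : ∀ x ∈ Set.Icc 0 εs, 0 ≤ f x ∧ f x ≤ (1 + δ) * a * x)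
    (hf2 : ∀ x ∈ Set.Icc 0 εs, |f x - a * x| ≤ C * x ^ 2) :
    ∃ K : ℝ, ∀ n : ℕ, 1 ≤ n → ∀ x ∈ Set.Icc 0 εs,
      |derivWithin (derivWithin (fun y => f^[n] y / a ^ n) (Set.Icc 0 εs))
        (Set.Icc 0 εs) x| ≤ K :=
  rescaled_iterates_second_deriv_bounded_general a δ C εs f ha0 ha1 hδ hC hεs hsmall hf hf'0 hf''
    hf1
end

section
/- If in addition c_in(q) ≠ c_out(q) for every q ∈ Ω, then at every point of Ω: ∂²t/∂u∂v = (1/(c_out − c_in))·((∂c_in/∂v)·(∂t/∂u) − (∂c_out/∂u)·(∂t/∂v)). -/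
/-!
Differentiate `∂_v r = a ∂_v t` along `w` and `∂_w r = b ∂_w t` along `v`. By symmetry of second
derivatives of the `C²` functions `r` and `t`, the two left-hand sides agree and the two mixed
partials of `t` agree, so subtracting leaves `(b - a) ∂_v ∂_w t = ∂_w a ∂_v t - ∂_v b ∂_w t`,
which can be solved for `∂_v ∂_w t` wherever `a ≠ b`.
-/

open Filter Topology

section Field

variable {𝕜 E F : Type*} [NontriviallyNormedField 𝕜] [NormedAddCommGroup E] [NormedSpace 𝕜 E]
  [NormedAddCommGroup F] [NormedSpace 𝕜 F]

theorem fderiv_fderiv_apply {f : E → F} {x : E} (hf : DifferentiableAt 𝕜 (fderiv 𝕜 f) x)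
    (v w : E) : fderiv 𝕜 (fun p => fderiv 𝕜 f p v) x w = fderiv 𝕜 (fderiv 𝕜 f) x w v := by
  rw [fderiv_clm_apply hf (differentiableAt_const v)]
  simp

theorem fderiv_fun_mul_apply {a g : E → 𝕜} {x : E} (ha : DifferentiableAt 𝕜 a x)
    (hg : DifferentiableAt 𝕜 g x) (w : E) :
    fderiv 𝕜 (fun p => a p * g p) x w = fderiv 𝕜 a x w * g x + a x * fderiv 𝕜 g x w := by
  rw [fderiv_fun_mul ha hg]
  simp only [add_apply, smul_apply, smul_eq_mul]
  ring

end Field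

section RCLike

variable {𝕜 E F : Type*} [RCLike 𝕜] [NormedAddCommGroup E] [NormedSpace 𝕜 E]
  [NormedAddCommGroup F] [NormedSpace 𝕜 F]

theorem ContDiffAt.fderiv_fderiv_apply_comm {f : E → F} {x : E} (hf : ContDiffAt 𝕜 2 f x)
    (v w : E) :
    fderiv 𝕜 (fun p => fderiv 𝕜 f p v) x w = fderiv 𝕜 (fun p => fderiv 𝕜 f p w) x v := by
  have hf' : DifferentiableAt 𝕜 (fderiv 𝕜 f) x :=
    (hf.fderiv_right (m := 1) le_rfl).differentiableAt one_ne_zero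
  rw [fderiv_fderiv_apply hf', fderiv_fderiv_apply hf']
  exact hf.isSymmSndFDerivAt (by simp) w v

theorem sub_mul_fderiv_fderiv_apply_of_characteristic {t r a b : E → 𝕜} {x v w : E}
    (ht : ContDiffAt 𝕜 2 t x) (hr : ContDiffAt 𝕜 2 r x)
    (ha : DifferentiableAt 𝕜 a x) (hb : DifferentiableAt 𝕜 b x)
    (hv : (fun p => fderiv 𝕜 r p v) =ᶠ[𝓝 x] fun p => a p * fderiv 𝕜 t p v)
    (hw : (fun p => fderiv 𝕜 r p w) =ᶠ[𝓝 x] fun p => b p * fderiv 𝕜 t p w) :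
    (b x - a x) * fderiv 𝕜 (fun p => fderiv 𝕜 t p w) x v =
      fderiv 𝕜 a x w * fderiv 𝕜 t x v - fderiv 𝕜 b x v * fderiv 𝕜 t x w := by
  have ht' : DifferentiableAt 𝕜 (fderiv 𝕜 t) x :=
    (ht.fderiv_right (m := 1) le_rfl).differentiableAt one_ne_zero
  have hr_mixed := hr.fderiv_fderiv_apply_comm v w
  rw [hv.fderiv_eq, hw.fderiv_eq,
    fderiv_fun_mul_apply ha (ht'.clm_apply (differentiableAt_const v)),
    fderiv_fun_mul_apply hb (ht'.clm_apply (differentiableAt_const w)),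
    ht.fderiv_fderiv_apply_comm v w] at hr_mixed
  linear_combination -hr_mixed

end RCLike

/-- For a characteristic system `∂r/∂u = c_in·∂t/∂u`,
`∂r/∂v = c_out·∂t/∂v` on an open set `Ω ⊆ ℝ²` with `c_in ≠ c_out` on `Ω`, the mixed second
derivative of `t` satisfies
`∂²t/∂u∂v = (1/(c_out−c_in))·((∂c_in/∂v)·(∂t/∂u) − (∂c_out/∂u)·(∂t/∂v))`. -/
theorem mixed_derivative_t
    (Ω : Set (ℝ × ℝ)) (hΩ : IsOpen Ω)
    (t r cin cout : ℝ × ℝ → ℝ)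
    (ht : ContDiffOn ℝ 2 t Ω) (hr : ContDiffOn ℝ 2 r Ω)
    (hcin : ∀ q ∈ Ω, DifferentiableAt ℝ cin q)
    (hcout : ∀ q ∈ Ω, DifferentiableAt ℝ cout q)
    (hchar_u : ∀ q ∈ Ω, fderiv ℝ r q (1, 0) = cin q * fderiv ℝ t q (1, 0))
    (hchar_v : ∀ q ∈ Ω, fderiv ℝ r q (0, 1) = cout q * fderiv ℝ t q (0, 1))
    (hne : ∀ q ∈ Ω, cin q ≠ cout q) :
    ∀ q ∈ Ω,
      fderiv ℝ (fun q => fderiv ℝ t q (0, 1)) q (1, 0) =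
        (1 / (cout q - cin q)) *
          (fderiv ℝ cin q (0, 1) * fderiv ℝ t q (1, 0) -
            fderiv ℝ cout q (1, 0) * fderiv ℝ t q (0, 1)) := by
  intro q hq
  have hΩq : Ω ∈ 𝓝 q := hΩ.mem_nhds hq
  have key := sub_mul_fderiv_fderiv_apply_of_characteristic (ht.contDiffAt hΩq)
    (hr.contDiffAt hΩq) (hcin q hq) (hcout q hq) (eventuallyEq_of_mem hΩq hchar_u)
    (eventuallyEq_of_mem hΩq hchar_v)
  have hsub : cout q - cin q ≠ 0 := sub_ne_zero.2 (hne q hq).symm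
  rw [one_div_mul_eq_div, eq_div_iff hsub, ← key, mul_comm]
end
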